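/- Let A, B, C be finite sets (in a type with decidable equality) such that A ∪ B, B ∪ C, and A ∪ C are nonempty. Then the Jaccard dissimilarity satisfies the triangle inequality: 1 − J(A, C) ≤ (1 − J(A, B)) + (1 − J(B, C)), where J(X,Y) = |X ∩ Y| / |X ∪ Y| as real numbers. -/

import Mathlib

/-!
Writing `1 - J(A, B) = |A ∆ B| / |A ∪ B|` and `2 |A ∪ B| = |A| + |B| + |A ∆ B|`, the Jaccard
dissimilarity is the Steinhaus transform `2 d(A, B) / (d(A, ∅) + d(B, ∅) + d(A, B))` of the
symmetric-difference metric `d(A, B) = |A ∆ B|` with base point `∅`, and the Steinhaus transform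
of any pseudometric satisfies the triangle inequality.
-/

open Finset
open scoped symmDiff

section Steinhaus

variable {𝕜 : Type*} [Field 𝕜] [LinearOrder 𝕜] [IsStrictOrderedRing 𝕜]

lemma div_add_self_mono {k t t' : 𝕜} (hk : 0 ≤ k) (ht : 0 ≤ t) (htt' : t ≤ t') :
    t / (k + t) ≤ t' / (k + t') := by
  rcases ht.eq_or_lt with rfl | ht
  · simp only [zero_div]
    exact div_nonneg (ht.trans htt') (by linarith)
  · rw [div_le_div_iff₀ (by linarith) (by linarith)]
    nlinarith

lemma div_add_self_anti {k k' t : 𝕜} (hk : 0 ≤ k) (ht : 0 ≤ t) (hkk' : k ≤ k') :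
    t / (k' + t) ≤ t / (k + t) := by
  rcases ht.eq_or_lt with rfl | ht
  · simp
  · exact div_le_div_of_nonneg_left ht.le (by linarith) (by linarith)

def steinhausTransform {X : Type*} (d : X → X → 𝕜) (p x y : X) : 𝕜 :=
  2 * d x y / (d x p + d y p + d x y)

theorem steinhausTransform_triangle {X : Type*} (d : X → X → 𝕜) (nonneg : ∀ x y, 0 ≤ d x y)
    (symm : ∀ x y, d x y = d y x) (triangle : ∀ x y z, d x z ≤ d x y + d y z) (p x y z : X) :
    steinhausTransform d p x z ≤ steinhausTransform d p x y + steinhausTransform d p y z := by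
  simp only [steinhausTransform, mul_div_assoc]
  rw [← mul_add]
  gcongr
  have hv_a : d y p ≤ d x y + d x p := symm x y ▸ triangle y x p
  have hv_b : d y p ≤ d y z + d z p := triangle y z p
  have hu := nonneg x p
  have hv := nonneg y p
  have hw := nonneg z p
  -- The triangle inequality through `p` lets the common denominator of the middle line shrink to
  -- either of the two on the right.
  calc d x z / (d x p + d z p + d x z)
      ≤ (d x y + d y z) / (d x p + d z p + (d x y + d y z)) :=
        div_add_self_mono (by linarith) (nonneg x z) (triangle x y z)
    _ = d x y / (d x p + d z p + d y z + d x y) + d y z / (d x p + d z p + d x y + d y z) := by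
        rw [add_div]; ring
    _ ≤ d x y / (d x p + d y p + d x y) + d y z / (d y p + d z p + d y z) :=
        add_le_add (div_add_self_anti (by linarith) (nonneg x y) (by linarith))
          (div_add_self_anti (by linarith) (nonneg y z) (by linarith))

end Steinhaus

section Jaccard

variable {α : Type*} [DecidableEq α]

lemma card_symmDiff_add_card_inter (s t : Finset α) : #(s ∆ t) + #(s ∩ t) = #(s ∪ t) := by
  have := card_sdiff_add_card_inter (s ∪ t) (s ∩ t)
  rw [inter_eq_right.mpr inter_subset_union] at this
  rwa [symmDiff_eq_sup_sdiff_inf]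

lemma card_symmDiff_triangle (s t u : Finset α) : #(s ∆ u) ≤ #(s ∆ t) + #(t ∆ u) :=
  (card_le_card (symmDiff_triangle s t u)).trans (card_union_le _ _)

lemma one_sub_jaccard_eq_steinhausTransform {s t : Finset α} (h : (s ∪ t).Nonempty) :
    1 - (#(s ∩ t) : ℝ) / #(s ∪ t) =
      steinhausTransform (fun s t : Finset α ↦ (#(s ∆ t) : ℝ)) ∅ s t := by
  have hunion : (0 : ℝ) < #(s ∪ t) := by exact_mod_cast card_pos.mpr h
  have hsymmDiff : (#(s ∆ t) : ℝ) + #(s ∩ t) = #(s ∪ t) := by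
    exact_mod_cast card_symmDiff_add_card_inter s t
  have hinter : (#(s ∪ t) : ℝ) + #(s ∩ t) = #s + #t := by
    exact_mod_cast card_union_add_card_inter s t
  have hdenom : (#s : ℝ) + #t + #(s ∆ t) = 2 * #(s ∪ t) := by linarith
  simp only [steinhausTransform, ← bot_eq_empty, symmDiff_bot, hdenom]
  field_simp
  linarith

end Jaccard

theorem jaccard_dissimilarity_triangle {α : Type*} [DecidableEq α] (A B C : Finset α)
    (hAB : (A ∪ B).Nonempty) (hBC : (B ∪ C).Nonempty) (hAC : (A ∪ C).Nonempty) :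
    1 - (((A ∩ C).card : ℝ) / ((A ∪ C).card : ℝ)) ≤
      (1 - ((A ∩ B).card : ℝ) / ((A ∪ B).card : ℝ)) +
      (1 - ((B ∩ C).card : ℝ) / ((B ∪ C).card : ℝ)) := by
  rw [one_sub_jaccard_eq_steinhausTransform hAB, one_sub_jaccard_eq_steinhausTransform hBC,
    one_sub_jaccard_eq_steinhausTransform hAC]
  exact steinhausTransform_triangle _ (fun _ _ ↦ Nat.cast_nonneg _)
    (fun s t ↦ by rw [symmDiff_comm]) (fun s t u ↦ by exact_mod_cast card_symmDiff_triangle s t u)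
    ∅ A B C
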